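/- arXiv:0803.2719 — 2 statements merged into one kernel-verified Lean document; each statement's English description precedes it below -/
import Mathlib

section
/- Let F and G be summable ball kernels and let ψ be an ultrametric wavelet with ball I. Then v(x, t) = e^{−η_I t} ψ(x) (where η_I is formed from the kernel G) satisfies the quadratic cascade equation for all x ∈ ℚ_p and all t > 0. -/
/-!
Split every integral at the wavelet ball `I = B(c, p^γ)`. For `x ∈ I` the kernel `G(sup(x, ξ))`
equals `G(I)` wherever `ψ ξ ≠ ψ x` inside `I`, and equals `G(B(c, |ξ - c|))` outside `I`, where the
spheres `|ξ - c| = p^k` have measure `p^k - p^(k-1)`; with `∫ ψ = 0` this gives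
`∫ G(sup(x, ξ)) (ψ x - ψ ξ) dξ = η_I ψ x`. For `x ∉ I` the kernel is constant on `I`, and both sides
vanish.

In the quadratic term, ultrametricity gives `sup(x, ξ, η) = sup(x, η)` whenever `ψ ξ ≠ 0` and
`ψ η ≠ ψ x` (off the diagonals), so the inner integral is `ψ ξ` times a quantity independent of `ξ`,
and the outer integral vanishes because `∫ ψ = 0`. Hence `ψ` is an eigenfunction of the spatial
operator with eigenvalue `η_I`, and `e^(-η_I t) ψ` solves the cascade equation.
-/

open MeasureTheory

/-- The index (base-`p` logarithm of the radius) of the smallest ball of `ℚ_[p]`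
containing the two points `x` and `y` (for `x ≠ y`): its radius is `‖x - y‖ = p ^ (-(x-y).valuation)`. -/
noncomputable def supIdx {p : ℕ} [Fact p.Prime] (x y : ℚ_[p]) : ℤ := -(x - y).valuation

/-- The index of the smallest ball containing the three points `x`, `ξ`, `η`
(for pairwise distinct points): its radius is `max (‖x-ξ‖, ‖x-η‖, ‖ξ-η‖)`. -/
noncomputable def sup3Idx {p : ℕ} [Fact p.Prime] (x ξ η : ℚ_[p]) : ℤ :=
  max (supIdx x ξ) (max (supIdx x η) (supIdx ξ η))

/-- A ball kernel: a function on balls of `ℚ_[p]`, encoded as a function of a center and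
an index (log_p of the radius), independent of the choice of center in the ball. -/
def IsBallKernel {p : ℕ} [Fact p.Prime] (F : ℚ_[p] → ℤ → ℂ) : Prop :=
  ∀ c c' : ℚ_[p], ∀ γ : ℤ, dist c c' ≤ (p : ℝ) ^ γ → F c γ = F c' γ

/-- Summability of a ball kernel: for every ball `B(c, p^γ₀)`,
`Σ_{γ > γ₀} ‖F(B(c, p^γ))‖ (p^γ - p^(γ-1)) < ∞`. -/
def KernelSummable {p : ℕ} [Fact p.Prime] (F : ℚ_[p] → ℤ → ℂ) : Prop :=
  ∀ c : ℚ_[p], ∀ γ₀ : ℤ, Summable (fun n : ℕ =>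
    ‖F c (γ₀ + 1 + n)‖ * ((p : ℝ) ^ (γ₀ + 1 + (n : ℤ)) - (p : ℝ) ^ (γ₀ + (n : ℤ))))

/-- An ultrametric wavelet with ball `B(c, p^γ)`: vanishes outside the ball, is constant
on each of the `p` maximal subballs (balls of radius `p^(γ-1)`), has zero mean, and is
not identically zero. -/
def IsWavelet {p : ℕ} [Fact p.Prime] [MeasurableSpace ℚ_[p]] (μ : Measure ℚ_[p])
    (ψ : ℚ_[p] → ℂ) (c : ℚ_[p]) (γ : ℤ) : Prop :=
  (∀ x, (p : ℝ) ^ γ < dist x c → ψ x = 0) ∧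
    (∀ x y, dist x y ≤ (p : ℝ) ^ (γ - 1) → ψ x = ψ y) ∧
    (∫ x, ψ x ∂μ) = 0 ∧ ψ ≠ 0

/-- The eigenvalue `λ_I = T(I) ν(I) + Σ_{J > I} T(J) (ν(J) - ν(J,I))` attached to the ball
`I = B(c, p^γI)` and the ball kernel `T`. -/
noncomputable def lamBall {p : ℕ} [Fact p.Prime] (T : ℚ_[p] → ℤ → ℂ) (c : ℚ_[p]) (γI : ℤ) : ℂ :=
  T c γI * (((p : ℝ) ^ γI : ℝ) : ℂ) +
    ∑' n : ℕ, T c (γI + 1 + n) *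
      (((p : ℝ) ^ (γI + 1 + (n : ℤ)) - (p : ℝ) ^ (γI + (n : ℤ)) : ℝ) : ℂ)

/-- The coefficient `Φ_{I,J}` for balls `J = B(c, p^γJ) ⊊ I = B(c, p^γI)`. -/
noncomputable def PhiIJ {p : ℕ} [Fact p.Prime] (F : ℚ_[p] → ℤ → ℂ) (c : ℚ_[p])
    (γI γJ : ℤ) : ℂ :=
  (((p : ℝ) ^ (2 * (γI - 1)) : ℝ) : ℂ) * F c γI - (((p : ℝ) ^ (2 * γJ) : ℝ) : ℂ) * F c γJ -
    ∑ γ ∈ Finset.Ioo γJ γI, (((p : ℝ) ^ (2 * γ) - (p : ℝ) ^ (2 * γ - 2) : ℝ) : ℂ) * F c γ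

/-- The (spatial) operator of the quadratic cascade equation:
`∫∫ F(sup(x,ξ,η)) f(ξ)(f(η) - f(x)) dμ(ξ) dμ(η) + ∫ G(sup(x,ξ))(f(x) - f(ξ)) dμ(ξ)`. -/
noncomputable def cascadeOp {p : ℕ} [Fact p.Prime] [MeasurableSpace ℚ_[p]]
    (μ : Measure ℚ_[p]) (F G : ℚ_[p] → ℤ → ℂ) (f : ℚ_[p] → ℂ) (x : ℚ_[p]) : ℂ :=
  (∫ ξ, ∫ η, F x (sup3Idx x ξ η) * (f ξ * (f η - f x)) ∂μ ∂μ) +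
    ∫ ξ, G x (supIdx x ξ) * (f x - f ξ) ∂μ

/-- `v` satisfies the quadratic cascade equation
`∂ₜ v(x,t) + ∫∫ F(sup(x,ξ,η)) v(ξ,t)(v(η,t) - v(x,t)) dμ(ξ) dμ(η)
  + ∫ G(sup(x,ξ))(v(x,t) - v(ξ,t)) dμ(ξ) = 0` for all `x ∈ ℚ_p` and all `t > 0`. -/
def SatisfiesCascade {p : ℕ} [Fact p.Prime] [MeasurableSpace ℚ_[p]]
    (μ : Measure ℚ_[p]) (F G : ℚ_[p] → ℤ → ℂ) (v : ℚ_[p] → ℝ → ℂ) : Prop :=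
  ∀ x : ℚ_[p], ∀ t : ℝ, 0 < t →
    HasDerivAt (fun s => v x s) (-(cascadeOp μ F G (fun y => v y t) x)) t

open Metric

lemma IsUltrametricDist.dist_eq_of_dist_lt {X : Type*} [PseudoMetricSpace X] [IsUltrametricDist X]
    {x y z : X} (h : dist x y < dist y z) : dist x z = dist y z :=
  (IsUltrametricDist.dist_eq_max_of_dist_ne_dist x y z h.ne).trans (max_eq_right h.le)

lemma IsUltrametricDist.dist_le_of_mem_closedBall {X : Type*} [PseudoMetricSpace X]
    [IsUltrametricDist X] {x y c : X} {r : ℝ} (hx : x ∈ closedBall c r) (hy : y ∈ closedBall c r) :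
    dist x y ≤ r :=
  (dist_triangle_max x c y).trans (max_le hx (dist_comm c y ▸ hy))

namespace Padic

variable {p : ℕ} [hp : Fact p.Prime]

lemma strictMono_prime_zpow (p : ℕ) [Fact p.Prime] : StrictMono fun k : ℤ => (p : ℝ) ^ k :=
  zpow_right_strictMono₀ (mod_cast (Fact.out : p.Prime).one_lt)

lemma prime_zpow_pos (k : ℤ) : (0 : ℝ) < (p : ℝ) ^ k := zpow_pos (mod_cast hp.out.pos) k

lemma zpow_le_dist_of_lt {x y : ℚ_[p]} {k : ℤ} (h : (p : ℝ) ^ (k - 1) < dist x y) :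
    (p : ℝ) ^ k ≤ dist x y := by
  rw [dist_eq_norm] at h ⊢
  exact not_lt.1 fun h' => h.not_ge ((norm_lt_pow_iff_norm_le_pow_sub_one _ _).1 h')

lemma zpow_supIdx {x y : ℚ_[p]} (h : x ≠ y) : (p : ℝ) ^ supIdx x y = dist x y := by
  rw [supIdx, dist_eq_norm, norm_eq_zpow_neg_valuation (sub_ne_zero.2 h)]

lemma supIdx_le_supIdx {x y x' y' : ℚ_[p]} (hxy : x ≠ y) (h : dist x y ≤ dist x' y') :
    supIdx x y ≤ supIdx x' y' := by
  have hxy' : x' ≠ y' := dist_pos.1 ((dist_pos.2 hxy).trans_le h)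
  rwa [← (strictMono_prime_zpow p).le_iff_le, zpow_supIdx hxy, zpow_supIdx hxy']

lemma supIdx_congr {x y x' y' : ℚ_[p]} (h : dist x y = dist x' y') :
    supIdx x y = supIdx x' y' := by
  rcases eq_or_ne x y with rfl | hxy
  · obtain rfl : x' = y' := dist_le_zero.1 (by rw [← h, dist_self])
    simp [supIdx]
  · have hxy' : x' ≠ y' := dist_pos.1 ((dist_pos.2 hxy).trans_eq h)
    exact le_antisymm (supIdx_le_supIdx hxy h.le) (supIdx_le_supIdx hxy' h.ge)

lemma supIdx_eq_of_dist_eq {x y : ℚ_[p]} {k : ℤ} (h : dist x y = (p : ℝ) ^ k) :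
    supIdx x y = k := by
  have hxy : x ≠ y := dist_pos.1 (h ▸ prime_zpow_pos k)
  exact (strictMono_prime_zpow p).injective ((zpow_supIdx hxy).trans h)

lemma supIdx_eq_supIdx_of_dist_lt {x c η : ℚ_[p]} (h : dist x c < dist c η) :
    supIdx x η = supIdx c η :=
  supIdx_congr (IsUltrametricDist.dist_eq_of_dist_lt h)

lemma supIdx_comm (x y : ℚ_[p]) : supIdx x y = supIdx y x := supIdx_congr (dist_comm x y)

lemma sup3Idx_eq_supIdx {x ξ η : ℚ_[p]} (hξx : ξ ≠ x) (hξη : ξ ≠ η)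
    (h : dist x ξ ≤ dist x η) : sup3Idx x ξ η = supIdx x η := by
  have hξη' : dist ξ η ≤ dist x η :=
    (dist_triangle_max ξ x η).trans (max_le (dist_comm ξ x ▸ h) le_rfl)
  have := supIdx_le_supIdx hξx.symm h
  have := supIdx_le_supIdx hξη hξη'
  rw [sup3Idx]
  omega

lemma dist_mul_zpow (a b : ℚ_[p]) (γ : ℤ) :
    dist (a * (p : ℚ_[p]) ^ (-γ)) (b * (p : ℚ_[p]) ^ (-γ)) = dist a b * (p : ℝ) ^ γ := by
  rw [dist_eq_norm, dist_eq_norm, ← sub_mul, norm_mul, norm_p_zpow, neg_neg]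

lemma closedBall_zero_zpow_eq_biUnion (γ : ℤ) :
    closedBall (0 : ℚ_[p]) ((p : ℝ) ^ γ) =
      ⋃ i ∈ Finset.range p, closedBall ((i : ℚ_[p]) * (p : ℚ_[p]) ^ (-γ)) ((p : ℝ) ^ (γ - 1)) := by
  have hp0 : (p : ℚ_[p]) ^ γ ≠ 0 := zpow_ne_zero _ (mod_cast hp.out.ne_zero)
  have hscale : ∀ z : ℚ_[p], z = z * (p : ℚ_[p]) ^ γ * (p : ℚ_[p]) ^ (-γ) := fun z => by
    rw [zpow_neg, mul_inv_cancel_right₀ hp0]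
  have hzpow : (p : ℝ) ^ (γ - 1) = (p : ℝ) ^ (-1 : ℤ) * (p : ℝ) ^ γ := by
    rw [← zpow_add₀ (mod_cast hp.out.ne_zero)]; ring_nf
  ext z
  simp only [Set.mem_iUnion, mem_closedBall, Finset.mem_range, exists_prop]
  constructor
  · intro hz
    set w := z * (p : ℚ_[p]) ^ γ
    have hw : ‖w‖ ≤ 1 := by
      rw [hscale z, ← zero_mul ((p : ℚ_[p]) ^ (-γ)), dist_mul_zpow, dist_zero_right] at hz
      exact (mul_le_iff_le_one_left (prime_zpow_pos γ)).1 hz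
    obtain ⟨n, hnp, hn⟩ := PadicInt.exists_mem_range ⟨w, hw⟩
    rw [IsLocalRing.mem_maximalIdeal, PadicInt.mem_nonunits] at hn
    have hn' : dist w n ≤ (p : ℝ) ^ (-1 : ℤ) := by
      rw [dist_eq_norm, ← zero_sub, ← norm_lt_pow_iff_norm_le_pow_sub_one, zpow_zero]
      exact_mod_cast hn
    refine ⟨n, hnp, ?_⟩
    rw [hscale z, dist_mul_zpow, hzpow]
    exact mul_le_mul_of_nonneg_right hn' (prime_zpow_pos γ).le
  · rintro ⟨n, -, hz⟩
    have hn : dist ((n : ℚ_[p]) * (p : ℚ_[p]) ^ (-γ)) 0 ≤ (p : ℝ) ^ γ := by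
      rw [← zero_mul ((p : ℚ_[p]) ^ (-γ)), dist_mul_zpow, dist_zero_right]
      exact mul_le_of_le_one_left (prime_zpow_pos γ).le (mod_cast Padic.norm_int_le_one n)
    exact (dist_triangle_max _ _ _).trans (max_le
      (hz.trans ((strictMono_prime_zpow p).monotone (by omega))) hn)

lemma pairwiseDisjoint_closedBall_natCast_mul_zpow (γ : ℤ) :
    (Finset.range p : Set ℕ).PairwiseDisjoint
      fun i => closedBall ((i : ℚ_[p]) * (p : ℚ_[p]) ^ (-γ)) ((p : ℝ) ^ (γ - 1)) := by
  intro i hi j hj hij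
  simp only [Finset.coe_range, Set.mem_Iio] at hi hj
  have hunit : dist (i : ℚ_[p]) j = 1 := by
    rw [dist_eq_norm, show (i : ℚ_[p]) - j = ((i - j : ℤ) : ℚ_[p]) by push_cast; ring]
    refine le_antisymm (Padic.norm_int_le_one _) (not_lt.1 fun h => hij ?_)
    obtain ⟨k, hk⟩ := Padic.norm_intCast_lt_one_iff.1 h
    have : k = 0 := by nlinarith
    rw [this, mul_zero] at hk
    omega
  have hcenters := dist_mul_zpow (i : ℚ_[p]) j γ
  rw [hunit, one_mul] at hcenters
  refine Set.disjoint_left.2 fun z hzi hzj => ?_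
  rw [mem_closedBall] at hzi hzj
  have := (dist_triangle_max _ z _).trans (max_le (dist_comm z _ ▸ hzi) hzj)
  rw [hcenters] at this
  exact this.not_gt ((strictMono_prime_zpow p) (by omega))

lemma sphere_zpow_eq_diff (c : ℚ_[p]) (k : ℤ) :
    sphere c ((p : ℝ) ^ k) = closedBall c ((p : ℝ) ^ k) \ closedBall c ((p : ℝ) ^ (k - 1)) := by
  ext x
  simp only [mem_sphere, Set.mem_sdiff, mem_closedBall, not_le]
  constructor
  · intro h
    exact ⟨h.le, h ▸ strictMono_prime_zpow p (by omega)⟩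
  · rintro ⟨h1, h2⟩
    exact le_antisymm h1 (zpow_le_dist_of_lt h2)

lemma supIdx_eq_of_mem_sphere {c η : ℚ_[p]} {k : ℤ} (h : η ∈ sphere c ((p : ℝ) ^ k)) :
    supIdx c η = k :=
  supIdx_eq_of_dist_eq (by rw [dist_comm]; exact h)

lemma compl_closedBall_zpow_eq_iUnion_sphere (c : ℚ_[p]) (γ : ℤ) :
    (closedBall c ((p : ℝ) ^ γ))ᶜ = ⋃ n : ℕ, sphere c ((p : ℝ) ^ (γ + 1 + n)) := by
  ext x
  simp only [Set.mem_compl_iff, mem_closedBall, not_le, Set.mem_iUnion, mem_sphere]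
  constructor
  · intro hx
    have hxc : x ≠ c := dist_pos.1 ((prime_zpow_pos γ).trans hx)
    rw [← zpow_supIdx hxc] at hx ⊢
    have := (strictMono_prime_zpow p).lt_iff_lt.1 hx
    exact ⟨(supIdx x c - γ - 1).toNat, congrArg _ (by omega)⟩
  · rintro ⟨n, hn⟩
    exact hn ▸ strictMono_prime_zpow p (by omega)

section Measure

variable [MeasurableSpace ℚ_[p]] [BorelSpace ℚ_[p]] (μ : Measure ℚ_[p]) [μ.IsAddHaarMeasure]

lemma measureReal_closedBall_zero_zpow_eq_mul (γ : ℤ) :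
    μ.real (closedBall (0 : ℚ_[p]) ((p : ℝ) ^ γ)) =
      p * μ.real (closedBall (0 : ℚ_[p]) ((p : ℝ) ^ (γ - 1))) := by
  rw [closedBall_zero_zpow_eq_biUnion, measureReal_biUnion_finset
    (pairwiseDisjoint_closedBall_natCast_mul_zpow γ) (fun _ _ => measurableSet_closedBall)
    (fun _ _ => (isCompact_closedBall _ _).measure_lt_top.ne)]
  simp [Measure.addHaar_real_closedBall_center]

variable {μ}

lemma measureReal_closedBall_zpow (hμ : μ (closedBall 0 1) = 1) (c : ℚ_[p]) (γ : ℤ) :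
    μ.real (closedBall c ((p : ℝ) ^ γ)) = (p : ℝ) ^ γ := by
  have hp0 : (p : ℝ) ≠ 0 := mod_cast hp.out.ne_zero
  rw [Measure.addHaar_real_closedBall_center]
  induction γ using Int.induction_on with
  | zero => simp [measureReal_def, hμ]
  | succ n ih =>
    rw [measureReal_closedBall_zero_zpow_eq_mul, add_sub_cancel_right, ih, zpow_add_one₀ hp0, mul_comm]
  | pred n ih =>
    have h := measureReal_closedBall_zero_zpow_eq_mul μ (-n)
    have hpow : (p : ℝ) ^ (-(n : ℤ)) = p * (p : ℝ) ^ (-(n : ℤ) - 1) := by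
      rw [mul_comm, ← zpow_add_one₀ hp0, sub_add_cancel]
    exact mul_left_cancel₀ hp0 (h.symm.trans (ih.trans hpow))


lemma measureReal_sphere_zpow (hμ : μ (closedBall 0 1) = 1) (c : ℚ_[p]) (k : ℤ) :
    μ.real (sphere c ((p : ℝ) ^ k)) = (p : ℝ) ^ k - (p : ℝ) ^ (k - 1) := by
  rw [sphere_zpow_eq_diff, measureReal_sdiff
    (closedBall_subset_closedBall ((strictMono_prime_zpow p).monotone (by omega)))
    measurableSet_closedBall (isCompact_closedBall _ _).measure_lt_top.ne,
    measureReal_closedBall_zpow hμ, measureReal_closedBall_zpow hμ]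

lemma setIntegral_sphere_zpow {E : Type*} [NormedAddCommGroup E] [NormedSpace ℝ E]
    [CompleteSpace E] (hμ : μ (closedBall 0 1) = 1) (T : ℤ → E) (c : ℚ_[p]) (k : ℤ) :
    ∫ η in sphere c ((p : ℝ) ^ k), T (supIdx c η) ∂μ =
      ((p : ℝ) ^ k - (p : ℝ) ^ (k - 1)) • T k := by
  rw [setIntegral_congr_fun isClosed_sphere.measurableSet
    (fun η hη => congrArg T (supIdx_eq_of_mem_sphere hη)), setIntegral_const,
    measureReal_sphere_zpow hμ]

lemma integrableOn_compl_closedBall_zpow (hμ : μ (closedBall 0 1) = 1) (T : ℤ → ℂ)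
    (c : ℚ_[p]) (γ : ℤ) (hT : Summable fun n : ℕ =>
      ‖T (γ + 1 + n)‖ * ((p : ℝ) ^ (γ + 1 + (n : ℤ)) - (p : ℝ) ^ (γ + (n : ℤ)))) :
    IntegrableOn (fun η => T (supIdx c η)) (closedBall c ((p : ℝ) ^ γ))ᶜ μ := by
  rw [compl_closedBall_zpow_eq_iUnion_sphere]
  refine integrableOn_iUnion_of_summable_integral_norm (fun n => ?_) (hT.congr fun n => ?_)
  · exact (integrableOn_const (isCompact_sphere _ _).measure_lt_top.ne).congr_fun
      (fun η hη => congrArg T (supIdx_eq_of_mem_sphere hη).symm) isClosed_sphere.measurableSet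
  · rw [setIntegral_sphere_zpow hμ (fun k => ‖T k‖), smul_eq_mul, mul_comm,
      show γ + 1 + (n : ℤ) - 1 = γ + n by ring]

lemma setIntegral_compl_closedBall_zpow (hμ : μ (closedBall 0 1) = 1) (T : ℤ → ℂ)
    (c : ℚ_[p]) (γ : ℤ) (hT : Summable fun n : ℕ =>
      ‖T (γ + 1 + n)‖ * ((p : ℝ) ^ (γ + 1 + (n : ℤ)) - (p : ℝ) ^ (γ + (n : ℤ)))) :
    ∫ η in (closedBall c ((p : ℝ) ^ γ))ᶜ, T (supIdx c η) ∂μ =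
      ∑' n : ℕ, T (γ + 1 + n) *
        (((p : ℝ) ^ (γ + 1 + (n : ℤ)) - (p : ℝ) ^ (γ + (n : ℤ)) : ℝ) : ℂ) := by
  have hint := integrableOn_compl_closedBall_zpow hμ T c γ hT
  rw [compl_closedBall_zpow_eq_iUnion_sphere] at hint ⊢
  have hdisj : Pairwise (Function.onFun Disjoint fun n : ℕ => sphere c ((p : ℝ) ^ (γ + 1 + n))) :=
    fun m n hmn => Set.disjoint_left.2 fun η hm hn =>
      hmn (by have := (strictMono_prime_zpow p).injective (hm.symm.trans hn); omega)
  refine (hasSum_integral_iUnion (fun _ => isClosed_sphere.measurableSet) hdisj hint).tsum_eq.symm.trans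
    (tsum_congr fun n => ?_)
  rw [setIntegral_sphere_zpow hμ, Complex.real_smul, mul_comm,
    show γ + 1 + (n : ℤ) - 1 = γ + n by ring]

end Measure

end Padic

lemma IsBallKernel.apply_supIdx_eq {p : ℕ} [Fact p.Prime] {T : ℚ_[p] → ℤ → ℂ}
    (hT : IsBallKernel T) {x c η : ℚ_[p]} (h : dist x c < dist c η) :
    T x (supIdx x η) = T c (supIdx c η) := by
  have hcη : c ≠ η := dist_pos.1 (dist_nonneg.trans_lt h)
  rw [Padic.supIdx_eq_supIdx_of_dist_lt h, hT x c _ (by rw [Padic.zpow_supIdx hcη]; exact h.le)]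

namespace IsWavelet

open Padic

variable {p : ℕ} [Fact p.Prime] [MeasurableSpace ℚ_[p]] {μ : Measure ℚ_[p]}
  {ψ : ℚ_[p] → ℂ} {c : ℚ_[p]} {γ : ℤ}

lemma eq_zero_of_notMem (hψ : IsWavelet μ ψ c γ) {x : ℚ_[p]}
    (hx : x ∉ closedBall c ((p : ℝ) ^ γ)) : ψ x = 0 :=
  hψ.1 x (not_le.1 hx)

lemma mem_closedBall_of_ne_zero (hψ : IsWavelet μ ψ c γ) {x : ℚ_[p]} (hx : ψ x ≠ 0) :
    x ∈ closedBall c ((p : ℝ) ^ γ) :=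
  not_not.1 (mt hψ.eq_zero_of_notMem hx)

lemma lt_dist_of_ne (hψ : IsWavelet μ ψ c γ) {x y : ℚ_[p]} (h : ψ x ≠ ψ y) :
    (p : ℝ) ^ (γ - 1) < dist x y :=
  not_le.1 (mt (hψ.2.1 x y) h)

lemma mem_closedBall_or_of_ne (hψ : IsWavelet μ ψ c γ) {x y : ℚ_[p]} (h : ψ x ≠ ψ y) :
    x ∈ closedBall c ((p : ℝ) ^ γ) ∨ y ∈ closedBall c ((p : ℝ) ^ γ) := by
  by_contra! hxy
  exact h ((hψ.eq_zero_of_notMem hxy.1).trans (hψ.eq_zero_of_notMem hxy.2).symm)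

lemma continuous (hψ : IsWavelet μ ψ c γ) : Continuous ψ :=
  continuous_iff_continuousAt.2 fun x => Filter.EventuallyEq.continuousAt (y := ψ x) <|
    Filter.mem_of_superset (closedBall_mem_nhds x (prime_zpow_pos (γ - 1))) fun y hy => hψ.2.1 y x hy

lemma integrable [OpensMeasurableSpace ℚ_[p]] [IsFiniteMeasureOnCompacts μ] (hψ : IsWavelet μ ψ c γ) : Integrable ψ μ :=
  hψ.continuous.integrable_of_hasCompactSupport <|
    HasCompactSupport.intro (isCompact_closedBall c _) fun _ hx => hψ.eq_zero_of_notMem hx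

lemma setIntegral_closedBall (hψ : IsWavelet μ ψ c γ) :
    ∫ x in closedBall c ((p : ℝ) ^ γ), ψ x ∂μ = 0 := by
  rw [setIntegral_eq_integral_of_forall_compl_eq_zero fun x hx => hψ.eq_zero_of_notMem hx]
  exact hψ.2.2.1

lemma integral_mul_eq_zero (hψ : IsWavelet μ ψ c γ) {g : ℚ_[p] → ℂ} {a : ℂ}
    (hg : ∀ η ∈ closedBall c ((p : ℝ) ^ γ), g η = a) : ∫ η, g η * ψ η ∂μ = 0 := by
  have : (fun η => g η * ψ η) = fun η => a * ψ η := funext fun η => by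
    by_cases hη : η ∈ closedBall c ((p : ℝ) ^ γ)
    · rw [hg η hη]
    · rw [hψ.eq_zero_of_notMem hη, mul_zero, mul_zero]
  rw [this, integral_const_mul, hψ.2.2.1, mul_zero]

lemma sup3Idx_eq_supIdx (hψ : IsWavelet μ ψ c γ) {x ξ η : ℚ_[p]} (hξ : ψ ξ ≠ 0)
    (hηx : ψ η ≠ ψ x) (hξx : ξ ≠ x) (hξη : ξ ≠ η) : sup3Idx x ξ η = supIdx x η := by
  have hξI := hψ.mem_closedBall_of_ne_zero hξ
  have hfar : (p : ℝ) ^ γ ≤ dist x η := zpow_le_dist_of_lt (hψ.lt_dist_of_ne hηx.symm)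
  refine Padic.sup3Idx_eq_supIdx hξx hξη ?_
  rcases hψ.mem_closedBall_or_of_ne hηx.symm with hx | hη
  · exact (IsUltrametricDist.dist_le_of_mem_closedBall hx hξI).trans hfar
  · exact (dist_triangle_max x η ξ).trans
      (max_le le_rfl ((IsUltrametricDist.dist_le_of_mem_closedBall hη hξI).trans hfar))

lemma kernel_mul_sub_eq_indicator {T : ℚ_[p] → ℤ → ℂ} (hT : IsBallKernel T)
    (hψ : IsWavelet μ ψ c γ) {x : ℚ_[p]} (hx : x ∈ closedBall c ((p : ℝ) ^ γ)) (η : ℚ_[p]) :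
    T x (supIdx x η) * (ψ η - ψ x) =
      (closedBall c ((p : ℝ) ^ γ)).indicator (fun η => T c γ * (ψ η - ψ x)) η +
        (closedBall c ((p : ℝ) ^ γ))ᶜ.indicator (fun η => -ψ x * T c (supIdx c η)) η := by
  by_cases hη : η ∈ closedBall c ((p : ℝ) ^ γ)
  · rw [Set.indicator_of_mem hη, Set.indicator_of_notMem (not_not.2 hη), add_zero]
    rcases eq_or_ne (ψ η) (ψ x) with hψη | hψη
    · rw [hψη, sub_self, mul_zero, mul_zero]
    · have hdist : dist x η = (p : ℝ) ^ γ :=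
        le_antisymm (IsUltrametricDist.dist_le_of_mem_closedBall hx hη)
          (zpow_le_dist_of_lt (hψ.lt_dist_of_ne hψη.symm))
      rw [supIdx_eq_of_dist_eq hdist, hT x c γ hx]
  · have hfar : dist x c < dist c η := hx.trans_lt (dist_comm η c ▸ not_le.1 hη)
    rw [Set.indicator_of_notMem hη, Set.indicator_of_mem hη, zero_add,
      hT.apply_supIdx_eq hfar, hψ.eq_zero_of_notMem hη]
    ring

variable [BorelSpace ℚ_[p]] [μ.IsAddHaarMeasure]

lemma integral_kernel_mul_sub_of_mem (hμ : μ (closedBall 0 1) = 1) {T : ℚ_[p] → ℤ → ℂ}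
    (hT : IsBallKernel T) (hTs : KernelSummable T) (hψ : IsWavelet μ ψ c γ) {x : ℚ_[p]}
    (hx : x ∈ closedBall c ((p : ℝ) ^ γ)) :
    ∫ η, T x (supIdx x η) * (ψ η - ψ x) ∂μ = -(lamBall T c γ * ψ x) := by
  set I := closedBall c ((p : ℝ) ^ γ)
  have hI : IntegrableOn (fun η => T c γ * (ψ η - ψ x)) I μ :=
    (hψ.integrable.integrableOn.sub
      (integrableOn_const (isCompact_closedBall _ _).measure_lt_top.ne)).const_mul _
  have hIc : IntegrableOn (fun η => -ψ x * T c (supIdx c η)) Iᶜ μ :=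
    (integrableOn_compl_closedBall_zpow hμ (T c) c γ (hTs c γ)).const_mul _
  rw [funext (hψ.kernel_mul_sub_eq_indicator hT hx), integral_add (hI.integrable_indicator measurableSet_closedBall)
      (hIc.integrable_indicator measurableSet_closedBall.compl),
    integral_indicator measurableSet_closedBall, integral_indicator measurableSet_closedBall.compl,
    integral_const_mul, integral_sub hψ.integrable.integrableOn
      (integrableOn_const (isCompact_closedBall _ _).measure_lt_top.ne),
    hψ.setIntegral_closedBall, setIntegral_const, measureReal_closedBall_zpow hμ,
    integral_const_mul, setIntegral_compl_closedBall_zpow hμ (T c) c γ (hTs c γ), lamBall,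
    Complex.real_smul]
  ring

lemma integral_kernel_mul_sub (hμ : μ (closedBall 0 1) = 1) {T : ℚ_[p] → ℤ → ℂ}
    (hT : IsBallKernel T) (hTs : KernelSummable T) (hψ : IsWavelet μ ψ c γ) (x : ℚ_[p]) :
    ∫ η, T x (supIdx x η) * (ψ η - ψ x) ∂μ = -(lamBall T c γ * ψ x) := by
  by_cases hx : x ∈ closedBall c ((p : ℝ) ^ γ)
  · exact hψ.integral_kernel_mul_sub_of_mem hμ hT hTs hx
  have hfar : ∀ η ∈ closedBall c ((p : ℝ) ^ γ), dist η c < dist c x := fun η hη =>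
    hη.trans_lt (dist_comm x c ▸ not_le.1 hx)
  have := hψ.integral_mul_eq_zero (g := fun η => -T x (supIdx x η)) (a := -T x (supIdx x c))
    fun η hη => by
      rw [supIdx_comm, supIdx_eq_supIdx_of_dist_lt (hfar η hη), supIdx_comm]
  rw [hψ.eq_zero_of_notMem hx, mul_zero, neg_zero]
  simpa only [sub_zero, neg_mul, integral_neg, neg_eq_zero, mul_neg] using this

lemma integral_sup3Idx_eq_zero (hψ : IsWavelet μ ψ c γ) (F : ℚ_[p] → ℤ → ℂ) (x : ℚ_[p]) :
    ∫ ξ, ∫ η, F x (sup3Idx x ξ η) * (ψ ξ * (ψ η - ψ x)) ∂μ ∂μ = 0 := by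
  set L := ∫ η, F x (supIdx x η) * (ψ η - ψ x) ∂μ
  have hinner : ∀ ξ ≠ x, ∫ η, F x (sup3Idx x ξ η) * (ψ ξ * (ψ η - ψ x)) ∂μ = ψ ξ * L := by
    intro ξ hξx
    rw [← integral_const_mul]
    refine integral_congr_ae ((μ.ae_ne ξ).mono fun η hηξ => ?_)
    dsimp only
    rcases eq_or_ne (ψ ξ) 0 with hξ | hξ
    · simp only [hξ, zero_mul, mul_zero]
    rcases eq_or_ne (ψ η) (ψ x) with hηx | hηx
    · simp only [hηx, sub_self, mul_zero]
    rw [hψ.sup3Idx_eq_supIdx hξ hηx hξx hηξ.symm]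
    ring
  rw [integral_congr_ae ((μ.ae_ne x).mono hinner), integral_mul_const, hψ.2.2.1, zero_mul]

lemma cascadeOp_const_mul (hμ : μ (closedBall 0 1) = 1) (F : ℚ_[p] → ℤ → ℂ)
    {G : ℚ_[p] → ℤ → ℂ} (hG : IsBallKernel G) (hGs : KernelSummable G)
    (hψ : IsWavelet μ ψ c γ) (a : ℂ) (x : ℚ_[p]) :
    cascadeOp μ F G (fun y => a * ψ y) x = a * (lamBall G c γ * ψ x) := by
  have hquad : (fun ξ => ∫ η, F x (sup3Idx x ξ η) * (a * ψ ξ * (a * ψ η - a * ψ x)) ∂μ) =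
      fun ξ => a ^ 2 * ∫ η, F x (sup3Idx x ξ η) * (ψ ξ * (ψ η - ψ x)) ∂μ :=
    funext fun ξ => by
      rw [← integral_const_mul]
      exact integral_congr_ae (Filter.Eventually.of_forall fun η => by ring)
  have hlin : (fun ξ => G x (supIdx x ξ) * (a * ψ x - a * ψ ξ)) =
      fun ξ => -a * (G x (supIdx x ξ) * (ψ ξ - ψ x)) := funext fun ξ => by ring
  rw [cascadeOp, hquad, hlin, integral_const_mul, integral_const_mul,
    hψ.integral_sup3Idx_eq_zero, hψ.integral_kernel_mul_sub hμ hG hGs]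
  ring

end IsWavelet

theorem single_wavelet_solution_general {p : ℕ} [Fact p.Prime]
    [MeasurableSpace ℚ_[p]] [BorelSpace ℚ_[p]]
    (μ : Measure ℚ_[p]) [μ.IsAddHaarMeasure] (hμ : μ (Metric.closedBall 0 1) = 1)
    (F G : ℚ_[p] → ℤ → ℂ) (hG : IsBallKernel G)
    (hGs : KernelSummable G)
    (ψ : ℚ_[p] → ℂ) (c : ℚ_[p]) (γI : ℤ) (hψ : IsWavelet μ ψ c γI) :
    SatisfiesCascade μ F G
      (fun x t => Complex.exp (-(lamBall G c γI) * (t : ℂ)) * ψ x) := by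
  intro x t _
  have hexp : HasDerivAt (fun s : ℝ => Complex.exp (-(lamBall G c γI) * s))
      (Complex.exp (-(lamBall G c γI) * t) * -(lamBall G c γI)) t := by
    simpa using ((hasDerivAt_id t).ofReal_comp.const_mul (-(lamBall G c γI))).cexp
  rw [hψ.cascadeOp_const_mul hμ F hG hGs]
  exact (hexp.mul_const (ψ x)).congr_deriv (by ring)

/-- For summable ball kernels `F`, `G` and a wavelet `ψ` with ball
`I = B(c, p^γI)`, the function `v(x,t) = e^(-η_I t) ψ(x)` (with `η_I` formed from `G`)
satisfies the quadratic cascade equation for all `x` and all `t > 0`. -/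
theorem single_wavelet_solution {p : ℕ} [Fact p.Prime]
    [MeasurableSpace ℚ_[p]] [BorelSpace ℚ_[p]]
    (μ : Measure ℚ_[p]) [μ.IsAddHaarMeasure] (hμ : μ (Metric.closedBall 0 1) = 1)
    (F G : ℚ_[p] → ℤ → ℂ) (hF : IsBallKernel F) (hG : IsBallKernel G)
    (hFs : KernelSummable F) (hGs : KernelSummable G)
    (ψ : ℚ_[p] → ℂ) (c : ℚ_[p]) (γI : ℤ) (hψ : IsWavelet μ ψ c γI) :
    SatisfiesCascade μ F G
      (fun x t => Complex.exp (-(lamBall G c γI) * (t : ℂ)) * ψ x) :=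
  single_wavelet_solution_general μ hμ F G hG hGs ψ c γI hψ
end

section
/- Let F be an arbitrary ball kernel (no summability assumption) and let φ, ψ ∈ D_0(ℚ_p). Then for every x, η ∈ ℚ_p the inner integral h_x(η) = ∫ F(sup(x, ξ, η)) φ(ξ)(ψ(η) − ψ(x)) dμ(ξ) converges absolutely, and for every x ∈ ℚ_p the function η ↦ h_x(η) is absolutely integrable over ℚ_p, so that the iterated integral ∫ ( ∫ F(sup(x, ξ, η)) φ(ξ)(ψ(η) − ψ(x)) dμ(ξ) ) dμ(η) converges. -/
open MeasureTheory

/-!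
Fix `x` and a ball `B = B(x, p^M)`, `M ≥ 0`, containing the support of `φ`. For `η ∉ B` and
`ξ ∈ B` the smallest ball containing `x, ξ, η` is the smallest ball containing `x, η`, so the
inner integral is a constant multiple of `∫ φ = 0`. For `ξ, η ∈ B` its index lies between
`supIdx x η` and `M`; and the factor `ψ η - ψ x` vanishes unless `η` lies outside the ball of
local constancy of `ψ` around `x`, which bounds `supIdx x η` from below uniformly. So only
finitely many values of `F x` occur, the integrand is bounded on `B × B`, and `η ↦ h_x(η)` is
bounded and supported in `B`.
-/

open Metric

section MetricSpace

variable {X E : Type*} [PseudoMetricSpace X]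

theorem continuous_of_dist_le_imp_eq [TopologicalSpace E] {f : X → E}
    {r : ℝ} (hr : 0 < r) (hf : ∀ x y, dist x y ≤ r → f x = f y) : Continuous f :=
  continuous_iff_continuousAt.2 fun x => continuousAt_const.congr <|
    Filter.mem_of_superset (closedBall_mem_nhds x hr) fun y hy => hf x y (mem_closedBall'.1 hy)

theorem exists_closedBall_subset_closedBall_pow {b : ℝ} (hb : 1 < b) (c x : X) (r : ℝ) :
    ∃ n : ℕ, closedBall c r ⊆ closedBall x (b ^ n) := by
  obtain ⟨n, hn⟩ := pow_unbounded_of_one_lt (r + dist c x) hb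
  exact ⟨n, closedBall_subset_closedBall' hn.le⟩

end MetricSpace

section Integrable

variable {α E : Type*} [MeasurableSpace α] [NormedAddCommGroup E] {μ : Measure α}
  {f : α → E} {s : Set α} {C : ℝ}

theorem integrable_of_norm_le_of_eq_zero_off (hs : MeasurableSet s) (hμs : μ s ≠ ⊤)
    (hf : AEStronglyMeasurable f μ) (hbound : ∀ x ∈ s, ‖f x‖ ≤ C) (hzero : ∀ x ∉ s, f x = 0) :
    Integrable f μ :=
  (Measure.integrableOn_of_bounded hμs hf ((ae_restrict_iff' hs).2 (ae_of_all _ hbound))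
    ).integrable_of_forall_notMem_eq_zero hzero

theorem norm_integral_le_of_norm_le_of_eq_zero_off [NormedSpace ℝ E] (hμs : μ s < ⊤)
    (hbound : ∀ x ∈ s, ‖f x‖ ≤ C) (hzero : ∀ x ∉ s, f x = 0) :
    ‖∫ x, f x ∂μ‖ ≤ C * μ.real s := by
  rw [← setIntegral_eq_integral_of_forall_compl_eq_zero hzero]
  exact norm_setIntegral_le_of_norm_le_const hμs hbound

end Integrable

section SupIdx

variable {p : ℕ} [Fact p.Prime]

theorem one_lt_prime_cast : (1 : ℝ) < p := Nat.one_lt_cast.2 (Fact.out : p.Prime).one_lt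

theorem prime_cast_pos : (0 : ℝ) < p := zero_lt_one.trans one_lt_prime_cast

theorem zpow_supIdx {x y : ℚ_[p]} (h : x ≠ y) : (p : ℝ) ^ supIdx x y = dist x y := by
  rw [dist_eq_norm, Padic.norm_eq_zpow_neg_valuation (sub_ne_zero.2 h), supIdx]

theorem supIdx_le_of_dist_le {x y : ℚ_[p]} {m : ℤ} (hm : 0 ≤ m) (h : dist x y ≤ (p : ℝ) ^ m) :
    supIdx x y ≤ m := by
  rcases eq_or_ne x y with rfl | hxy
  · simpa [supIdx, Padic.valuation_zero] using hm
  · rwa [← zpow_supIdx hxy, zpow_le_zpow_iff_right₀ one_lt_prime_cast] at h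

theorem lt_supIdx_of_lt_dist {x y : ℚ_[p]} {m : ℤ} (h : (p : ℝ) ^ m < dist x y) :
    m < supIdx x y := by
  have hxy : x ≠ y := by
    rintro rfl
    exact (zpow_pos prime_cast_pos m).not_ge (by simpa using h.le)
  rwa [← zpow_supIdx hxy, zpow_lt_zpow_iff_right₀ one_lt_prime_cast] at h

theorem supIdx_eq_of_dist_eq {x y x' y' : ℚ_[p]} (h : dist x y = dist x' y') :
    supIdx x y = supIdx x' y' := by
  rcases eq_or_ne x y with rfl | hxy
  · rw [dist_self, eq_comm, dist_eq_zero] at h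
    simp [h, supIdx]
  · have hxy' : x' ≠ y' := by rwa [← dist_ne_zero, ← h, dist_ne_zero]
    rw [← zpow_supIdx hxy, ← zpow_supIdx hxy'] at h
    exact zpow_right_injective₀ prime_cast_pos one_lt_prime_cast.ne' h

theorem continuousOn_valuation : ContinuousOn (Padic.valuation : ℚ_[p] → ℤ) {0}ᶜ := by
  intro x hx
  refine (continuousAt_const (y := x.valuation)).congr ?_ |>.continuousWithinAt
  filter_upwards [ball_mem_nhds x (norm_pos_iff.2 hx)] with y hy
  have hdist : dist y 0 = dist x 0 := by
    rw [mem_ball, ← dist_zero_right] at hy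
    rw [IsUltrametricDist.dist_eq_max_of_dist_ne_dist y x 0 hy.ne, max_eq_right hy.le]
  simpa [supIdx] using (supIdx_eq_of_dist_eq hdist).symm

theorem measurable_supIdx [MeasurableSpace ℚ_[p]] [BorelSpace ℚ_[p]] :
    Measurable fun q : ℚ_[p] × ℚ_[p] => supIdx q.1 q.2 :=
  ((measurable_of_continuousOn_compl_singleton 0 continuousOn_valuation).comp
    (measurable_fst.sub measurable_snd)).neg

variable {x ξ η : ℚ_[p]} {m : ℤ}

theorem sup3Idx_le (hm : 0 ≤ m) (hξ : ξ ∈ closedBall x ((p : ℝ) ^ m))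
    (hη : η ∈ closedBall x ((p : ℝ) ^ m)) : sup3Idx x ξ η ≤ m := by
  rw [mem_closedBall'] at hξ hη
  refine max_le (supIdx_le_of_dist_le hm hξ) (max_le (supIdx_le_of_dist_le hm hη) ?_)
  refine supIdx_le_of_dist_le hm ((dist_triangle_max ξ x η).trans (max_le ?_ hη))
  rwa [dist_comm]

theorem sup3Idx_eq_of_far (hm : 0 ≤ m) (hξ : ξ ∈ closedBall x ((p : ℝ) ^ m))
    (hη : η ∉ closedBall x ((p : ℝ) ^ m)) : sup3Idx x ξ η = supIdx x η := by
  rw [mem_closedBall'] at hξ hη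
  have hlt : dist x ξ < dist x η := hξ.trans_lt (not_le.1 hη)
  have hξη : dist ξ η = dist x η := by
    rw [IsUltrametricDist.dist_eq_max_of_dist_ne_dist ξ x η (by rw [dist_comm]; exact hlt.ne),
      dist_comm ξ x, max_eq_right hlt.le]
  rw [sup3Idx, supIdx_eq_of_dist_eq hξη, max_self, max_eq_right]
  exact (supIdx_le_of_dist_le hm hξ).trans (lt_supIdx_of_lt_dist (not_le.1 hη)).le

theorem norm_apply_sup3Idx_le_sum (f : ℤ → ℂ) {k : ℤ} (hm : 0 ≤ m)
    (hξ : ξ ∈ closedBall x ((p : ℝ) ^ m)) (hη : η ∈ closedBall x ((p : ℝ) ^ m))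
    (hk : k ≤ supIdx x η) : ‖f (sup3Idx x ξ η)‖ ≤ ∑ j ∈ Finset.Icc k m, ‖f j‖ :=
  Finset.single_le_sum (f := fun j => ‖f j‖) (fun _ _ => norm_nonneg _) <|
    Finset.mem_Icc.2 ⟨hk.trans (le_max_of_le_right (le_max_left _ _)), sup3Idx_le hm hξ hη⟩

end SupIdx

section CascadeIntegrand

variable {p : ℕ} [Fact p.Prime]

noncomputable def cascadeIntegrand (F : ℚ_[p] → ℤ → ℂ) (φ ψ : ℚ_[p] → ℂ) (x η ξ : ℚ_[p]) : ℂ :=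
  F x (sup3Idx x ξ η) * (φ ξ * (ψ η - ψ x))

variable (F : ℚ_[p] → ℤ → ℂ) {φ ψ : ℚ_[p] → ℂ} {x η ξ : ℚ_[p]} {M : ℤ}

theorem measurable_cascadeIntegrand [MeasurableSpace ℚ_[p]] [BorelSpace ℚ_[p]]
    (hφ : Measurable φ) (hψ : Measurable ψ) (x : ℚ_[p]) :
    Measurable (Function.uncurry (cascadeIntegrand F φ ψ x)) := by
  have hsup3 : Measurable fun q : ℚ_[p] × ℚ_[p] => sup3Idx x q.2 q.1 :=
    (measurable_supIdx.comp (measurable_const.prodMk measurable_snd)).max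
      ((measurable_supIdx.comp (measurable_const.prodMk measurable_fst)).max
        (measurable_supIdx.comp (measurable_snd.prodMk measurable_fst)))
  exact (measurable_from_top.comp hsup3).mul
    ((hφ.comp measurable_snd).mul ((hψ.comp measurable_fst).sub measurable_const))

theorem cascadeIntegrand_eq_of_far (hM : 0 ≤ M)
    (hφ : ∀ ξ ∉ closedBall x ((p : ℝ) ^ M), φ ξ = 0) (hη : η ∉ closedBall x ((p : ℝ) ^ M)) :
    cascadeIntegrand F φ ψ x η = fun ξ => F x (supIdx x η) * (ψ η - ψ x) * φ ξ := by
  ext ξ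
  by_cases hξ : ξ ∈ closedBall x ((p : ℝ) ^ M)
  · rw [cascadeIntegrand, sup3Idx_eq_of_far hM hξ hη]
    ring
  · simp [cascadeIntegrand, hφ ξ hξ]

theorem norm_cascadeIntegrand_le {k : ℤ} (hM : 0 ≤ M) (hξ : ξ ∈ closedBall x ((p : ℝ) ^ M))
    (hη : η ∈ closedBall x ((p : ℝ) ^ M)) (hk : k ≤ supIdx x η) :
    ‖cascadeIntegrand F φ ψ x η ξ‖ ≤
      (∑ j ∈ Finset.Icc k M, ‖F x j‖) * (‖φ ξ‖ * ‖ψ η - ψ x‖) := by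
  rw [cascadeIntegrand, norm_mul, norm_mul]
  gcongr
  exact norm_apply_sup3Idx_le_sum (F x) hM hξ hη hk

theorem exists_norm_cascadeIntegrand_le {Cφ : ℝ} (hM : 0 ≤ M) (hφ : ∀ ξ, ‖φ ξ‖ ≤ Cφ)
    (hψ : ∃ γ : ℤ, ∀ y z, dist y z ≤ (p : ℝ) ^ γ → ψ y = ψ z) :
    ∃ C, ∀ η ∈ closedBall x ((p : ℝ) ^ M), ∀ ξ ∈ closedBall x ((p : ℝ) ^ M),
      ‖cascadeIntegrand F φ ψ x η ξ‖ ≤ C := by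
  obtain ⟨γ, hγ⟩ := hψ
  obtain ⟨Cψ, hCψ⟩ := (isCompact_closedBall x ((p : ℝ) ^ M)).exists_bound_of_continuousOn
    (continuous_of_dist_le_imp_eq (zpow_pos prime_cast_pos γ) hγ).continuousOn
  refine ⟨(∑ j ∈ Finset.Icc (γ + 1) M, ‖F x j‖) * (Cφ * (Cψ + Cψ)), fun η hη ξ hξ => ?_⟩
  have hbound : ‖cascadeIntegrand F φ ψ x η ξ‖ ≤
      (∑ j ∈ Finset.Icc (γ + 1) M, ‖F x j‖) * (‖φ ξ‖ * ‖ψ η - ψ x‖) := by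
    by_cases hψη : ψ η = ψ x
    · simp [cascadeIntegrand, hψη]
    · refine norm_cascadeIntegrand_le F hM hξ hη (lt_supIdx_of_lt_dist (not_le.1 fun h => ?_))
      exact hψη (hγ η x (by rwa [dist_comm]))
  have hψη : ‖ψ η - ψ x‖ ≤ Cψ + Cψ := (norm_sub_le _ _).trans
    (add_le_add (hCψ η hη) (hCψ x (mem_closedBall_self (zpow_pos prime_cast_pos M).le)))
  exact hbound.trans (mul_le_mul_of_nonneg_left
    (mul_le_mul (hφ ξ) hψη (norm_nonneg _) ((norm_nonneg _).trans (hφ ξ))) (by positivity))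

variable [MeasurableSpace ℚ_[p]] [BorelSpace ℚ_[p]] {μ : Measure ℚ_[p]}
  [IsFiniteMeasureOnCompacts μ]

theorem integrable_cascadeIntegrand (hM : 0 ≤ M) (hφc : Continuous φ)
    (hφ : ∀ ξ ∉ closedBall x ((p : ℝ) ^ M), φ ξ = 0) (hψ : Measurable ψ) (η : ℚ_[p]) :
    Integrable (cascadeIntegrand F φ ψ x η) μ := by
  have hφs : HasCompactSupport φ := HasCompactSupport.intro (isCompact_closedBall _ _) hφ
  by_cases hη : η ∈ closedBall x ((p : ℝ) ^ M)
  · obtain ⟨Cφ, hCφ⟩ := hφc.bounded_above_of_compact_support hφs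
    have hmeas := (measurable_cascadeIntegrand F hφc.measurable hψ x).of_uncurry_left (x := η)
    refine integrable_of_norm_le_of_eq_zero_off
      (C := (∑ j ∈ Finset.Icc (supIdx x η) M, ‖F x j‖) * (Cφ * ‖ψ η - ψ x‖))
      measurableSet_closedBall measure_closedBall_lt_top.ne hmeas.aestronglyMeasurable
      (fun ξ hξ => (norm_cascadeIntegrand_le F hM hξ hη le_rfl).trans ?_)
      (fun ξ hξ => by simp [cascadeIntegrand, hφ ξ hξ])
    gcongr
    exact hCφ ξ
  · rw [cascadeIntegrand_eq_of_far F hM hφ hη]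
    exact (hφc.integrable_of_hasCompactSupport hφs).const_mul _

theorem integrable_integral_cascadeIntegrand (hM : 0 ≤ M) (hφc : Continuous φ)
    (hφ : ∀ ξ ∉ closedBall x ((p : ℝ) ^ M), φ ξ = 0) (hφmean : ∫ ξ, φ ξ ∂μ = 0)
    (hψ : ∃ γ : ℤ, ∀ y z, dist y z ≤ (p : ℝ) ^ γ → ψ y = ψ z) :
    Integrable (fun η => ∫ ξ, cascadeIntegrand F φ ψ x η ξ ∂μ) μ := by
  obtain ⟨Cφ, hCφ⟩ := hφc.bounded_above_of_compact_support
    (HasCompactSupport.intro (isCompact_closedBall _ _) hφ)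
  obtain ⟨C, hC⟩ := exists_norm_cascadeIntegrand_le F hM hCφ hψ
  obtain ⟨γ, hγ⟩ := hψ
  have hψc := continuous_of_dist_le_imp_eq (zpow_pos prime_cast_pos γ) hγ
  have hmeas := (measurable_cascadeIntegrand F hφc.measurable hψc.measurable x
    ).stronglyMeasurable.integral_prod_right' (ν := μ)
  refine integrable_of_norm_le_of_eq_zero_off measurableSet_closedBall
    measure_closedBall_lt_top.ne hmeas.aestronglyMeasurable
    (fun η hη => norm_integral_le_of_norm_le_of_eq_zero_off measure_closedBall_lt_top (hC η hη)
      (fun ξ hξ => by simp [cascadeIntegrand, hφ ξ hξ]))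
    (fun η hη => ?_)
  simp only [cascadeIntegrand_eq_of_far F hM hφ hη, integral_const_mul, hφmean, mul_zero]

end CascadeIntegrand

theorem iterated_integral_convergent_without_summability_general {p : ℕ} [Fact p.Prime]
    [MeasurableSpace ℚ_[p]] [BorelSpace ℚ_[p]]
    (μ : Measure ℚ_[p]) [μ.IsAddHaarMeasure]
    (F : ℚ_[p] → ℤ → ℂ)
    (φ ψ : ℚ_[p] → ℂ)
    (hφsupp : ∃ (c : ℚ_[p]) (γ : ℤ), ∀ x, (p : ℝ) ^ γ < dist x c → φ x = 0)
    (hφlc : ∃ γ : ℤ, ∀ x y, dist x y ≤ (p : ℝ) ^ γ → φ x = φ y)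
    (hφmean : (∫ x, φ x ∂μ) = 0)
    (hψlc : ∃ γ : ℤ, ∀ x y, dist x y ≤ (p : ℝ) ^ γ → ψ x = ψ y) :
    ∀ x : ℚ_[p],
      (∀ η : ℚ_[p],
        Integrable (fun ξ => F x (sup3Idx x ξ η) * (φ ξ * (ψ η - ψ x))) μ) ∧
      Integrable (fun η => ∫ ξ, F x (sup3Idx x ξ η) * (φ ξ * (ψ η - ψ x)) ∂μ) μ := by
  intro x
  obtain ⟨c, γ, hφc⟩ := hφsupp
  obtain ⟨n, hn⟩ :=
    exists_closedBall_subset_closedBall_pow (one_lt_prime_cast (p := p)) c x ((p : ℝ) ^ γ)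
  have hφ : ∀ ξ ∉ closedBall x ((p : ℝ) ^ (n : ℤ)), φ ξ = 0 := fun ξ hξ =>
    hφc ξ (not_le.1 fun h => hξ (by simpa using hn (mem_closedBall.2 h)))
  have hφcont : Continuous φ :=
    have ⟨γ, hγ⟩ := hφlc; continuous_of_dist_le_imp_eq (zpow_pos prime_cast_pos γ) hγ
  have hψcont : Continuous ψ :=
    have ⟨γ, hγ⟩ := hψlc; continuous_of_dist_le_imp_eq (zpow_pos prime_cast_pos γ) hγ
  exact ⟨integrable_cascadeIntegrand F n.cast_nonneg hφcont hφ hψcont.measurable,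
    integrable_integral_cascadeIntegrand F n.cast_nonneg hφcont hφ hφmean hψlc⟩

/-- For an arbitrary ball kernel `F` (no summability assumed) and
`φ, ψ ∈ D_0(ℚ_p)`, the inner integral
`h_x(η) = ∫ F(sup(x,ξ,η)) φ(ξ)(ψ(η) - ψ(x)) dμ(ξ)` converges absolutely for all `x, η`,
and for every `x` the function `η ↦ h_x(η)` is absolutely integrable, so the iterated
integral `∫ (∫ F(sup(x,ξ,η)) φ(ξ)(ψ(η) - ψ(x)) dμ(ξ)) dμ(η)` converges. -/
theorem iterated_integral_convergent_without_summability {p : ℕ} [Fact p.Prime]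
    [MeasurableSpace ℚ_[p]] [BorelSpace ℚ_[p]]
    (μ : Measure ℚ_[p]) [μ.IsAddHaarMeasure] (hμ : μ (Metric.closedBall 0 1) = 1)
    (F : ℚ_[p] → ℤ → ℂ) (hF : IsBallKernel F)
    (φ ψ : ℚ_[p] → ℂ)
    (hφsupp : ∃ (c : ℚ_[p]) (γ : ℤ), ∀ x, (p : ℝ) ^ γ < dist x c → φ x = 0)
    (hφlc : ∃ γ : ℤ, ∀ x y, dist x y ≤ (p : ℝ) ^ γ → φ x = φ y)
    (hφmean : (∫ x, φ x ∂μ) = 0)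
    (hψsupp : ∃ (c : ℚ_[p]) (γ : ℤ), ∀ x, (p : ℝ) ^ γ < dist x c → ψ x = 0)
    (hψlc : ∃ γ : ℤ, ∀ x y, dist x y ≤ (p : ℝ) ^ γ → ψ x = ψ y)
    (hψmean : (∫ x, ψ x ∂μ) = 0) :
    ∀ x : ℚ_[p],
      (∀ η : ℚ_[p],
        Integrable (fun ξ => F x (sup3Idx x ξ η) * (φ ξ * (ψ η - ψ x))) μ) ∧
      Integrable (fun η => ∫ ξ, F x (sup3Idx x ξ η) * (φ ξ * (ψ η - ψ x)) ∂μ) μ :=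
  iterated_integral_convergent_without_summability_general μ F φ ψ hφsupp hφlc hφmean hψlc
end
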